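/- Let L be a set, let (X,α) be an L-labeled metric space, and let ((X_n,α_n))_{n∈ℕ} be a sequence of L-labeled metric spaces. Then d^L_GH(X_n,α_n;X,α) → 0 if and only if for every ε > 0 there exist (i) a finite set S ⊆ X and a map β : L → S such that (S,β) is a labeled ε-net in (X,α), and (ii) for each n ∈ ℕ a finite set S_n ⊆ X_n and a map β_n : L → S_n such that (S_n,β_n) is a labeled ε-net in (X_n,α_n), with the property that d^L_GH(S_n,β_n;S,β) → 0 as n → ∞. -/
import Mathlib


open Filter Topology Metric Set

/-- A `(t,L)`-admissible pseudometric on the disjoint union `X ⊕ Y` of two `L`-labeled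
compact metric spaces `(X, α)` and `(Y, β)`: it is a pseudometric restricting to the
metrics of `X` and `Y`, the Hausdorff distance between `X` and `Y` computed with it is
at most `t`, and `sup_{ℓ ∈ L} d(α ℓ, β ℓ) ≤ t`. -/
def IsAdmissible {L X Y : Type*} [MetricSpace X] [MetricSpace Y]
    (α : L → X) (β : L → Y) (t : ℝ) (d : X ⊕ Y → X ⊕ Y → ℝ) : Prop :=
  (∀ p, d p p = 0) ∧
  (∀ p q, d p q = d q p) ∧
  (∀ p q r, d p r ≤ d p q + d q r) ∧
  (∀ x x' : X, d (Sum.inl x) (Sum.inl x') = dist x x') ∧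
  (∀ y y' : Y, d (Sum.inr y) (Sum.inr y') = dist y y') ∧
  (∀ x : X, ∀ ε > (0 : ℝ), ∃ y : Y, d (Sum.inl x) (Sum.inr y) ≤ t + ε) ∧
  (∀ y : Y, ∀ ε > (0 : ℝ), ∃ x : X, d (Sum.inl x) (Sum.inr y) ≤ t + ε) ∧
  (∀ ℓ : L, d (Sum.inl (α ℓ)) (Sum.inr (β ℓ)) ≤ t)

/-- The labeled Gromov–Hausdorff distance of `(X, α)` and `(Y, β)`. -/
noncomputable def lghDist {L X Y : Type*} [MetricSpace X] [MetricSpace Y]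
    (α : L → X) (β : L → Y) : ℝ :=
  sInf {t : ℝ | 0 ≤ t ∧ ∃ d : X ⊕ Y → X ⊕ Y → ℝ, IsAdmissible α β t d}


/-- `(S, β)` is a labeled `ε`-net in `(X, α)`, where the net is regarded as a metric
subspace: `S` is a finite `ε`-net in `X` and `sup_{ℓ ∈ L} d_X(α ℓ, β ℓ) < ε`. -/
def IsLabeledNetS {L X : Type*} [MetricSpace X]
    (α : L → X) (ε : ℝ) (S : Set X) (β : L → S) : Prop :=
  S.Finite ∧
  (∀ x : X, ∃ s ∈ S, dist x s ≤ ε) ∧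
  (⨆ ℓ : L, dist (α ℓ) (β ℓ : X)) < ε

open Bornology

section Helpers
variable {L X Y : Type*} [MetricSpace X] [MetricSpace Y]

lemma lghDist_nonneg (α : L → X) (β : L → Y) : 0 ≤ lghDist α β :=
  Real.sInf_nonneg (fun _ ht => ht.1)

lemma lghDist_le_of_admissible {α : L → X} {β : L → Y} {t : ℝ} {d : X ⊕ Y → X ⊕ Y → ℝ}
    (ht : 0 ≤ t) (hd : IsAdmissible α β t d) : lghDist α β ≤ t :=
  csInf_le ⟨0, fun _ hx => hx.1⟩ ⟨ht, d, hd⟩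

lemma lghDist_eq_zero_of_isEmpty (α : L → X) (β : L → Y)
    (h : IsEmpty X ∨ IsEmpty Y) : lghDist α β = 0 := by
  have trivAdm : IsEmpty X → IsEmpty Y → lghDist α β = 0 := by
    intro hX hY
    refine le_antisymm ?_ (lghDist_nonneg _ _)
    refine lghDist_le_of_admissible le_rfl ?_ (d := fun _ _ => 0)
    exact ⟨fun p => isEmptyElim p, fun p => isEmptyElim p, fun p => isEmptyElim p,
      fun x => isEmptyElim x, fun y => isEmptyElim y, fun x => isEmptyElim x,
      fun y => isEmptyElim y, fun ℓ => isEmptyElim (α ℓ)⟩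
  rcases h with h | h
  · rcases isEmpty_or_nonempty Y with hY | hY
    · exact trivAdm h hY
    · have he : {t : ℝ | 0 ≤ t ∧ ∃ d : X ⊕ Y → X ⊕ Y → ℝ, IsAdmissible α β t d} = ∅ := by
        ext t
        simp only [mem_setOf_eq, mem_empty_iff_false, iff_false, not_and]
        rintro ht ⟨d, hd⟩
        obtain ⟨y⟩ := hY
        obtain ⟨x, -⟩ := hd.2.2.2.2.2.2.1 y 1 one_pos
        exact isEmptyElim x
      rw [lghDist, he, Real.sInf_empty]
  · rcases isEmpty_or_nonempty X with hX | hX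
    · exact trivAdm hX h
    · have he : {t : ℝ | 0 ≤ t ∧ ∃ d : X ⊕ Y → X ⊕ Y → ℝ, IsAdmissible α β t d} = ∅ := by
        ext t
        simp only [mem_setOf_eq, mem_empty_iff_false, iff_false, not_and]
        rintro ht ⟨d, hd⟩
        obtain ⟨x⟩ := hX
        obtain ⟨y, -⟩ := hd.2.2.2.2.2.1 x 1 one_pos
        exact isEmptyElim y
      rw [lghDist, he, Real.sInf_empty]

lemma admissible_exists [CompactSpace X] [CompactSpace Y] [Nonempty X] [Nonempty Y]
    (α : L → X) (β : L → Y) :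
    ∃ t, 0 ≤ t ∧ ∃ d : X ⊕ Y → X ⊕ Y → ℝ, IsAdmissible α β t d := by
  obtain ⟨x0⟩ := ‹Nonempty X›
  obtain ⟨y0⟩ := ‹Nonempty Y›
  have hbX : IsBounded (univ : Set X) := isCompact_univ.isBounded
  have hbY : IsBounded (univ : Set Y) := isCompact_univ.isBounded
  have hdX : ∀ a b : X, dist a b ≤ diam (univ : Set X) :=
    fun a b => dist_le_diam_of_mem hbX trivial trivial
  have hdY : ∀ a b : Y, dist a b ≤ diam (univ : Set Y) :=
    fun a b => dist_le_diam_of_mem hbY trivial trivial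
  set t := diam (univ : Set X) + diam (univ : Set Y) with ht
  refine ⟨t, by positivity, fun p q =>
    match p, q with
    | Sum.inl x, Sum.inl x' => dist x x'
    | Sum.inr y, Sum.inr y' => dist y y'
    | Sum.inl x, Sum.inr y => dist x x0 + dist y0 y
    | Sum.inr y, Sum.inl x => dist x x0 + dist y0 y, ?_, ?_, ?_, ?_, ?_, ?_, ?_, ?_⟩
  · rintro (x | y) <;> simp
  · rintro (x | y) (x' | y') <;> simp [dist_comm]
  · rintro (a | a) (b | b) (c | c) <;> simp only
    · exact dist_triangle a b c
    · linarith [dist_triangle a b x0]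
    · linarith [dist_triangle a x0 c, dist_comm c x0, dist_nonneg (x := y0) (y := b)]
    · linarith [dist_triangle y0 b c]
    · linarith [dist_triangle c b x0, dist_comm c b]
    · linarith [dist_triangle a y0 c, dist_comm a y0, dist_nonneg (x := b) (y := x0)]
    · linarith [dist_triangle y0 b a, dist_comm b a]
    · exact dist_triangle a b c
  · intro x x'; rfl
  · intro y y'; rfl
  · intro x ε hε
    refine ⟨y0, ?_⟩
    simp only [dist_self]
    linarith [hdX x x0, hε.le, diam_nonneg (s := (univ : Set Y))]
  · intro y ε hε
    refine ⟨x0, ?_⟩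
    simp only [dist_self]
    linarith [hdY y0 y, hε.le, diam_nonneg (s := (univ : Set X))]
  · intro ℓ
    simp only
    linarith [hdX (α ℓ) x0, hdY y0 (β ℓ)]

/-- existence of labeled half-nets -/
lemma exists_halfnet [CompactSpace X] (α : L → X) {ε : ℝ} (hε : 0 < ε) :
    ∃ (S : Set X) (β : L → S), S.Finite ∧ (∀ x : X, ∃ s ∈ S, dist x s ≤ ε / 2) ∧
      (∀ ℓ, dist (α ℓ) (β ℓ : X) ≤ ε / 2) := by
  have htb : TotallyBounded (univ : Set X) := isCompact_univ.totallyBounded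
  obtain ⟨T, hTfin, hTcov⟩ := totallyBounded_iff.mp htb (ε / 2) (by linarith)
  have hnet : ∀ x : X, ∃ s ∈ T, dist x s ≤ ε / 2 := by
    intro x
    have := hTcov (mem_univ x)
    simp only [mem_iUnion, mem_ball] at this
    obtain ⟨y, hy, hxy⟩ := this
    exact ⟨y, hy, hxy.le⟩
  refine ⟨T, fun ℓ => ⟨(hnet (α ℓ)).choose, (hnet (α ℓ)).choose_spec.1⟩, hTfin, hnet,
    fun ℓ => (hnet (α ℓ)).choose_spec.2⟩

end Helpers

section Helpers2
variable {L X Y : Type*} [MetricSpace X] [MetricSpace Y]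

lemma myInf_le_add_inf {ι : Sort*} [Nonempty ι] {f g : ι → ℝ}
    (hf : BddBelow (Set.range f)) {c : ℝ} (h : ∀ i, f i ≤ c + g i) :
    (⨅ i, f i) ≤ c + ⨅ i, g i := by
  rw [← sub_le_iff_le_add']
  refine le_ciInf fun i => ?_
  have := ciInf_le hf i
  linarith [h i]

lemma myle_inf_add_inf {ι κ : Sort*} [Nonempty ι] [Nonempty κ] {f : ι → ℝ} {g : κ → ℝ}
    {c : ℝ} (h : ∀ i j, c ≤ f i + g j) : c ≤ (⨅ i, f i) + ⨅ j, g j := by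
  rw [← sub_le_iff_le_add']
  refine le_ciInf fun j => ?_
  rw [sub_le_iff_le_add']
  rw [← sub_le_iff_le_add]
  exact le_ciInf fun i => by linarith [h i j]

lemma dist_le_mysup [CompactSpace X] (f : L → X) (g : L → X) (ℓ : L) :
    dist (f ℓ) (g ℓ) ≤ ⨆ ℓ, dist (f ℓ) (g ℓ) :=
  le_ciSup (f := fun ℓ => dist (f ℓ) (g ℓ)) ⟨diam (univ : Set X), by
    rintro _ ⟨ℓ, rfl⟩
    exact dist_le_diam_of_mem isCompact_univ.isBounded trivial trivial⟩ ℓ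

lemma pseudo_nonneg {α : L → X} {β : L → Y} {t : ℝ} {d : X ⊕ Y → X ⊕ Y → ℝ}
    (hd : IsAdmissible α β t d) : ∀ p q, 0 ≤ d p q := by
  intro p q
  have h0 := hd.1 p
  have htr := hd.2.2.1 p q p
  have hs := hd.2.1 p q
  rw [h0] at htr
  linarith [hs ▸ htr]

end Helpers2

lemma backward {L : Type*} {X : Type*} [MetricSpace X] [CompactSpace X] (α : L → X)
    (Xn : ℕ → Type*) [∀ n, MetricSpace (Xn n)] [∀ n, CompactSpace (Xn n)]
    (αn : ∀ n, L → Xn n)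
    (h : ∀ ε > (0 : ℝ), ∃ (S : Set X) (β : L → S)
        (Sn : ∀ n, Set (Xn n)) (βn : ∀ n, L → Sn n),
          IsLabeledNetS α ε S β ∧
          (∀ n, IsLabeledNetS (αn n) ε (Sn n) (βn n)) ∧
          Filter.Tendsto (fun n => lghDist (βn n) β) Filter.atTop (nhds 0)) :
    Filter.Tendsto (fun n => lghDist (αn n) α) Filter.atTop (nhds 0) := by
  rcases isEmpty_or_nonempty X with hX | hX
  · have hz : (fun n => lghDist (αn n) α) = fun _ => (0 : ℝ) :=
      funext fun n => lghDist_eq_zero_of_isEmpty _ _ (Or.inr hX)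
    rw [hz]; exact tendsto_const_nhds
  rw [Metric.tendsto_atTop]
  intro ε hε
  obtain ⟨S, β, Sn, βn, hS, hSn, htend⟩ := h (ε / 8) (by linarith)
  obtain ⟨N, hN⟩ := Metric.tendsto_atTop.mp htend (ε / 8) (by linarith)
  refine ⟨N, fun n hn => ?_⟩
  rw [Real.dist_eq, sub_zero, abs_of_nonneg (lghDist_nonneg _ _)]
  rcases isEmpty_or_nonempty (Xn n) with hXe | hXne
  · rw [lghDist_eq_zero_of_isEmpty _ _ (Or.inl hXe)]; exact hε
  -- main construction
  have hlgh : lghDist (βn n) β < ε / 8 := by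
    have := hN n hn
    rwa [Real.dist_eq, sub_zero, abs_of_nonneg (lghDist_nonneg _ _)] at this
  obtain ⟨s₀, hs₀, -⟩ := (hS.2.1) hX.some
  obtain ⟨sn₀, hsn₀, -⟩ := (hSn n).2.1 hXne.some
  haveI : Finite ↥S := hS.1.to_subtype
  haveI : Finite ↥(Sn n) := (hSn n).1.to_subtype
  haveI : Nonempty ↥S := ⟨⟨s₀, hs₀⟩⟩
  haveI : Nonempty ↥(Sn n) := ⟨⟨sn₀, hsn₀⟩⟩
  have hne : Set.Nonempty {t : ℝ | 0 ≤ t ∧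
      ∃ d : (↥(Sn n) ⊕ ↥S) → (↥(Sn n) ⊕ ↥S) → ℝ, IsAdmissible (βn n) β t d} := by
    obtain ⟨tA, htA0, dA, hdA⟩ := admissible_exists (βn n) β
    exact ⟨tA, htA0, dA, hdA⟩
  have hlt : sInf {t : ℝ | 0 ≤ t ∧
      ∃ d : (↥(Sn n) ⊕ ↥S) → (↥(Sn n) ⊕ ↥S) → ℝ, IsAdmissible (βn n) β t d} < ε / 8 := hlgh
  obtain ⟨t0, ht0mem, ht0lt⟩ := exists_lt_of_csInf_lt hne hlt
  obtain ⟨ht00, d0, hd0⟩ := ht0mem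
  have hd0nn := pseudo_nonneg hd0
  obtain ⟨hd0refl, hd0symm, hd0tri, hd0l, hd0r, hd0h1, hd0h2, hd0lab⟩ := hd0
  set F : Xn n → X → ℝ := fun x y =>
    ⨅ p : ↥(Sn n) × ↥S, (dist x ↑p.1 + d0 (Sum.inl p.1) (Sum.inr p.2) + dist ↑p.2 y) with hF
  have hFbdd : ∀ (x : Xn n) (y : X), BddBelow (Set.range fun p : ↥(Sn n) × ↥S =>
      (dist x ↑p.1 + d0 (Sum.inl p.1) (Sum.inr p.2) + dist ↑p.2 y)) := by
    intro x y
    refine ⟨0, ?_⟩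
    rintro _ ⟨p, rfl⟩
    have := hd0nn (Sum.inl p.1) (Sum.inr p.2)
    positivity
  have hFle : ∀ (x : Xn n) (y : X) (p : ↥(Sn n) × ↥S),
      F x y ≤ dist x ↑p.1 + d0 (Sum.inl p.1) (Sum.inr p.2) + dist ↑p.2 y :=
    fun x y p => ciInf_le (hFbdd x y) p
  have hkey : lghDist (αn n) α ≤ ε / 4 + t0 := by
    refine lghDist_le_of_admissible (by linarith) (d := fun p q =>
      match p, q with
      | Sum.inl x, Sum.inl x' => dist x x'
      | Sum.inr y, Sum.inr y' => dist y y'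
      | Sum.inl x, Sum.inr y => F x y
      | Sum.inr y, Sum.inl x => F x y) ⟨?_, ?_, ?_, ?_, ?_, ?_, ?_, ?_⟩
    · rintro (x | y) <;> simp
    · rintro (x | y) (x' | y') <;> simp [dist_comm]
    · rintro (a | a) (b | b) (c | c) <;> simp only
      · exact dist_triangle a b c
      · -- F a c ≤ dist a b + F b c
        refine myInf_le_add_inf (hFbdd a c) fun p => ?_
        have := dist_triangle a b (↑p.1 : Xn n)
        linarith
      · -- dist a c ≤ F a b + F c b
        refine myle_inf_add_inf fun p q => ?_
        have h1 : dist a c ≤ dist a ↑p.1 + dist (p.1 : Xn n) ↑q.1 + dist ↑q.1 c := by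
          linarith [dist_triangle a (↑p.1 : Xn n) c, dist_triangle (↑p.1 : Xn n) (↑q.1 : Xn n) c,
            dist_comm (↑q.1 : Xn n) c]
        have h2 : dist (p.1 : Xn n) ↑q.1 ≤ d0 (Sum.inl p.1) (Sum.inr p.2)
            + dist (p.2 : X) ↑q.2 + d0 (Sum.inl q.1) (Sum.inr q.2) := by
          have e1 : dist (p.1 : Xn n) ↑q.1 = d0 (Sum.inl p.1) (Sum.inl q.1) := by
            rw [hd0l p.1 q.1, Subtype.dist_eq]
          have e2 : dist (p.2 : X) ↑q.2 = d0 (Sum.inr p.2) (Sum.inr q.2) := by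
            rw [hd0r p.2 q.2, Subtype.dist_eq]
          rw [e1, e2]
          have t1 := hd0tri (Sum.inl p.1) (Sum.inr p.2) (Sum.inl q.1)
          have t2 := hd0tri (Sum.inr p.2) (Sum.inr q.2) (Sum.inl q.1)
          have s1 := hd0symm (Sum.inr q.2) (Sum.inl q.1)
          linarith
        have h3 : dist (p.2 : X) ↑q.2 ≤ dist ↑p.2 b + dist ↑q.2 b := by
          linarith [dist_triangle (↑p.2 : X) b (↑q.2 : X), dist_comm b (↑q.2 : X)]
        linarith [dist_comm c (↑q.1 : Xn n)]
      · -- F a c ≤ F a b + dist b c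
        rw [add_comm]
        refine myInf_le_add_inf (hFbdd a c) fun p => ?_
        have := dist_triangle (↑p.2 : X) b c
        linarith
      · -- case inr a, inl b, inl c : F c a ≤ F b a + dist b c
        rw [add_comm]
        refine myInf_le_add_inf (hFbdd c a) fun p => ?_
        have := dist_triangle c b (↑p.1 : Xn n)
        have := dist_comm c b
        linarith
      · -- case inr a, inl b, inr c : dist a c ≤ F b a + F b c
        refine myle_inf_add_inf fun p q => ?_
        have h1 : dist a c ≤ dist ↑p.2 a + dist (p.2 : X) ↑q.2 + dist ↑q.2 c := by
          linarith [dist_triangle a (↑p.2 : X) c, dist_triangle (↑p.2 : X) (↑q.2 : X) c,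
            dist_comm (↑q.2 : X) c, dist_comm a (↑p.2 : X)]
        have h2 : dist (p.2 : X) ↑q.2 ≤ d0 (Sum.inl p.1) (Sum.inr p.2)
            + dist (p.1 : Xn n) ↑q.1 + d0 (Sum.inl q.1) (Sum.inr q.2) := by
          have e1 : dist (p.1 : Xn n) ↑q.1 = d0 (Sum.inl p.1) (Sum.inl q.1) := by
            rw [hd0l p.1 q.1, Subtype.dist_eq]
          have e2 : dist (p.2 : X) ↑q.2 = d0 (Sum.inr p.2) (Sum.inr q.2) := by
            rw [hd0r p.2 q.2, Subtype.dist_eq]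
          rw [e1, e2]
          have t1 := hd0tri (Sum.inr p.2) (Sum.inl p.1) (Sum.inr q.2)
          have t2 := hd0tri (Sum.inl p.1) (Sum.inl q.1) (Sum.inr q.2)
          have s1 := hd0symm (Sum.inr p.2) (Sum.inl p.1)
          linarith
        have h3 : dist (p.1 : Xn n) ↑q.1 ≤ dist b ↑p.1 + dist b ↑q.1 := by
          linarith [dist_triangle (↑p.1 : Xn n) b (↑q.1 : Xn n), dist_comm (↑p.1 : Xn n) b]
        linarith
      · -- case inr a, inr b, inl c : F c a ≤ dist a b + F c b
        refine myInf_le_add_inf (hFbdd c a) fun p => ?_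
        have := dist_triangle (↑p.2 : X) b a
        have := dist_comm a b
        linarith
      · exact dist_triangle a b c
    · intro x x'; rfl
    · intro y y'; rfl
    · -- Hausdorff 1
      intro x δ hδ
      obtain ⟨s, hs, hxs⟩ := (hSn n).2.1 x
      obtain ⟨u, hu⟩ := hd0h1 ⟨s, hs⟩ δ hδ
      refine ⟨↑u, ?_⟩
      simp only
      have := hFle x ↑u ⟨⟨s, hs⟩, u⟩
      simp only [dist_self] at this
      linarith
    · -- Hausdorff 2
      intro y δ hδ
      obtain ⟨s, hs, hys⟩ := hS.2.1 y
      obtain ⟨v, hv⟩ := hd0h2 ⟨s, hs⟩ δ hδ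
      refine ⟨↑v, ?_⟩
      simp only
      have := hFle ↑v y ⟨v, ⟨s, hs⟩⟩
      simp only [dist_self] at this
      have := dist_comm y s
      linarith
    · -- labels
      intro ℓ
      simp only
      have h1 : dist (αn n ℓ) ↑(βn n ℓ) < ε / 8 :=
        lt_of_le_of_lt (dist_le_mysup (αn n) (fun ℓ => ↑(βn n ℓ)) ℓ) (hSn n).2.2
      have h2 : dist (α ℓ) ↑(β ℓ) < ε / 8 :=
        lt_of_le_of_lt (dist_le_mysup α (fun ℓ => ↑(β ℓ)) ℓ) hS.2.2
      have h3 := hFle (αn n ℓ) (α ℓ) ⟨βn n ℓ, β ℓ⟩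
      dsimp only at h3
      have h4 := hd0lab ℓ
      have h5 := dist_comm (α ℓ) (↑(β ℓ) : X)
      linarith
  linarith

lemma forward {L : Type*} {X : Type*} [MetricSpace X] [CompactSpace X] (α : L → X)
    (Xn : ℕ → Type*) [∀ n, MetricSpace (Xn n)] [∀ n, CompactSpace (Xn n)]
    (αn : ∀ n, L → Xn n)
    (h : Filter.Tendsto (fun n => lghDist (αn n) α) Filter.atTop (nhds 0)) :
    ∀ ε > (0 : ℝ), ∃ (S : Set X) (β : L → S)
        (Sn : ∀ n, Set (Xn n)) (βn : ∀ n, L → Sn n),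
          IsLabeledNetS α ε S β ∧
          (∀ n, IsLabeledNetS (αn n) ε (Sn n) (βn n)) ∧
          Filter.Tendsto (fun n => lghDist (βn n) β) Filter.atTop (nhds 0) := by
  intro ε hε
  rcases isEmpty_or_nonempty X with hX | hX
  · haveI := hX
    haveI : IsEmpty L := Function.isEmpty α
    have pick : ∀ n, ∃ (T : Set (Xn n)) (b : L → T), IsLabeledNetS (αn n) ε T b := by
      intro n
      obtain ⟨T, b, hfin, hnet, hlab⟩ := exists_halfnet (αn n) hε
      exact ⟨T, b, hfin, fun x => (hnet x).imp (fun s hs => ⟨hs.1, hs.2.trans (by linarith)⟩),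
        by rw [Real.iSup_of_isEmpty]; exact hε⟩
    refine ⟨∅, fun ℓ => isEmptyElim ℓ, fun n => (pick n).choose,
      fun n => (pick n).choose_spec.choose,
      ⟨finite_empty, fun x => isEmptyElim x, by rw [Real.iSup_of_isEmpty]; exact hε⟩,
      fun n => (pick n).choose_spec.choose_spec, ?_⟩
    have hz : (fun n => lghDist ((pick n).choose_spec.choose)
        (fun ℓ => isEmptyElim ℓ : L → (∅ : Set X))) = fun _ => (0 : ℝ) :=
      funext fun n => lghDist_eq_zero_of_isEmpty _ _ (Or.inr ⟨fun x => x.2⟩)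
    rw [hz]; exact tendsto_const_nhds
  obtain ⟨S, β, hSfin, hSnet, hSlab⟩ := exists_halfnet α hε
  haveI : Finite ↥S := hSfin.to_subtype
  set r : ℕ → ℝ := fun n => lghDist (αn n) α + 2 * (1 / ((n : ℝ) + 1)) with hrdef
  set Q : ℕ → Prop := fun n => ∃ (T : Set (Xn n)) (b : L → T),
    IsLabeledNetS (αn n) ε T b ∧ lghDist b β ≤ r n with hQdef
  have pick : ∀ n, ∃ (T : Set (Xn n)) (b : L → T),
      IsLabeledNetS (αn n) ε T b ∧ (Q n → lghDist b β ≤ r n) := by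
    intro n
    by_cases hq : Q n
    · obtain ⟨T, b, hb, hbd⟩ := hq
      exact ⟨T, b, hb, fun _ => hbd⟩
    · obtain ⟨T, b, hfin, hnet, hlab⟩ := exists_halfnet (αn n) hε
      refine ⟨T, b, ⟨hfin, fun x => (hnet x).imp (fun s hs => ⟨hs.1, hs.2.trans (by linarith)⟩),
        lt_of_le_of_lt (Real.iSup_le hlab (by linarith)) (by linarith)⟩,
        fun hq' => absurd hq' hq⟩
  refine ⟨S, β, fun n => (pick n).choose, fun n => (pick n).choose_spec.choose,
    ⟨hSfin, fun x => (hSnet x).imp (fun s hs => ⟨hs.1, hs.2.trans (by linarith)⟩),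
      lt_of_le_of_lt (Real.iSup_le hSlab (by linarith)) (by linarith)⟩,
    fun n => (pick n).choose_spec.choose_spec.1, ?_⟩
  have hr : Filter.Tendsto r Filter.atTop (nhds 0) := by
    have h2 := tendsto_one_div_add_atTop_nhds_zero_nat.const_mul (2 : ℝ)
    have := h.add h2
    simpa [hrdef] using this
  have hQ : ∀ᶠ n in Filter.atTop, Q n := by
    have h1 : ∀ᶠ n in Filter.atTop, lghDist (αn n) α < ε / 16 :=
      h.eventually_lt_const (by linarith)
    have h2 : ∀ᶠ (n : ℕ) in Filter.atTop, (1 : ℝ) / ((n : ℝ) + 1) < ε / 16 :=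
      tendsto_one_div_add_atTop_nhds_zero_nat.eventually_lt_const (by linarith)
    filter_upwards [h1, h2] with n hn1 hn2
    have hrn0 : 0 ≤ r n := by
      have := lghDist_nonneg (αn n) α
      have hpos : (0:ℝ) ≤ 1 / ((n : ℝ) + 1) := by positivity
      rw [hrdef]; dsimp only; linarith
    rcases isEmpty_or_nonempty (Xn n) with hXe | hXne
    · haveI := hXe
      haveI : IsEmpty L := Function.isEmpty (αn n)
      refine ⟨∅, fun ℓ => isEmptyElim ℓ,
        ⟨finite_empty, fun x => isEmptyElim x, by rw [Real.iSup_of_isEmpty]; exact hε⟩, ?_⟩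
      rw [lghDist_eq_zero_of_isEmpty _ _ (Or.inl ⟨fun x => x.2⟩)]
      exact hrn0
    · haveI := hXne
      have hpos : (0:ℝ) < 1 / ((n : ℝ) + 1) := by positivity
      have hne : Set.Nonempty {t : ℝ | 0 ≤ t ∧
          ∃ d : (Xn n ⊕ X) → (Xn n ⊕ X) → ℝ, IsAdmissible (αn n) α t d} := by
        obtain ⟨tA, htA0, dA, hdA⟩ := admissible_exists (αn n) α
        exact ⟨tA, htA0, dA, hdA⟩
      have hlt : sInf {t : ℝ | 0 ≤ t ∧
          ∃ d : (Xn n ⊕ X) → (Xn n ⊕ X) → ℝ, IsAdmissible (αn n) α t d}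
          < lghDist (αn n) α + 1 / ((n : ℝ) + 1) := by
        have he : sInf {t : ℝ | 0 ≤ t ∧
            ∃ d : (Xn n ⊕ X) → (Xn n ⊕ X) → ℝ, IsAdmissible (αn n) α t d}
            = lghDist (αn n) α := rfl
        rw [he]; linarith
      obtain ⟨t', ht'mem, ht'lt⟩ := exists_lt_of_csInf_lt hne hlt
      obtain ⟨ht'0, d', hd'⟩ := ht'mem
      have hd'nn := pseudo_nonneg hd'
      obtain ⟨hrefl, hsym, htri, hl, hr', hh1, hh2, hlab⟩ := hd'
      have hφ : ∀ u : ↥S, ∃ x : Xn n, d' (Sum.inl x) (Sum.inr ↑u) ≤ t' + 1 / ((n : ℝ) + 1) :=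
        fun u => hh2 ↑u _ hpos
      choose φ hφs using hφ
      refine ⟨Set.range φ, fun ℓ => ⟨φ (β ℓ), mem_range_self _⟩, ⟨Set.finite_range φ, ?_, ?_⟩, ?_⟩
      · -- net condition
        intro x
        obtain ⟨y, hy⟩ := hh1 x _ hpos
        obtain ⟨s, hs, hys⟩ := hSnet y
        refine ⟨φ ⟨s, hs⟩, mem_range_self _, ?_⟩
        have e : dist x (φ ⟨s, hs⟩) = d' (Sum.inl x) (Sum.inl (φ ⟨s, hs⟩)) := (hl _ _).symm
        rw [e]
        have t1 := htri (Sum.inl x) (Sum.inr y) (Sum.inl (φ ⟨s, hs⟩))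
        have t2 := htri (Sum.inr y) (Sum.inr s) (Sum.inl (φ ⟨s, hs⟩))
        have e2 : d' (Sum.inr y) (Sum.inr s) = dist y s := hr' y s
        have s1 := hsym (Sum.inr s) (Sum.inl (φ ⟨s, hs⟩))
        have h3 := hφs ⟨s, hs⟩
        simp only [Subtype.coe_mk] at h3
        linarith
      · -- label sup
        refine lt_of_le_of_lt (Real.iSup_le (fun ℓ => ?_) (by linarith)) (by linarith :
          2 * t' + 1 / ((n : ℝ) + 1) + ε / 2 < ε)
        show dist (αn n ℓ) (φ (β ℓ)) ≤ 2 * t' + 1 / ((n : ℝ) + 1) + ε / 2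
        have e : dist (αn n ℓ) (φ (β ℓ)) = d' (Sum.inl (αn n ℓ)) (Sum.inl (φ (β ℓ))) :=
          (hl _ _).symm
        rw [e]
        have t1 := htri (Sum.inl (αn n ℓ)) (Sum.inr (α ℓ)) (Sum.inl (φ (β ℓ)))
        have t2 := htri (Sum.inr (α ℓ)) (Sum.inr ↑(β ℓ)) (Sum.inl (φ (β ℓ)))
        have e2 : d' (Sum.inr (α ℓ)) (Sum.inr ↑(β ℓ)) = dist (α ℓ) ↑(β ℓ) := hr' _ _
        have s1 := hsym (Sum.inr ↑(β ℓ)) (Sum.inl (φ (β ℓ)))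
        have h3 := hφs (β ℓ)
        have h4 := hlab ℓ
        have h5 := hSlab ℓ
        linarith
      · -- lghDist bound
        refine le_trans (lghDist_le_of_admissible (t := t' + 1 / ((n : ℝ) + 1))
          (d := fun p q => d' (Sum.map Subtype.val Subtype.val p)
            (Sum.map Subtype.val Subtype.val q))
          (by linarith) ?_) (by rw [hrdef]; dsimp only; linarith)
        refine ⟨fun p => hrefl _, fun p q => hsym _ _, fun p q r => htri _ _ _,
          ?_, ?_, ?_, ?_, ?_⟩
        · intro a a'
          show d' (Sum.inl ↑a) (Sum.inl ↑a') = dist a a'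
          rw [hl]; exact (Subtype.dist_eq a a').symm
        · intro v v'
          show d' (Sum.inr ↑v) (Sum.inr ↑v') = dist v v'
          rw [hr']; exact (Subtype.dist_eq v v').symm
        · intro a δ hδ
          obtain ⟨u, hu⟩ := a.2
          refine ⟨u, ?_⟩
          show d' (Sum.inl ↑a) (Sum.inr ↑u) ≤ _
          rw [← hu]
          exact (hφs u).trans (by linarith)
        · intro v δ hδ
          exact ⟨⟨φ v, mem_range_self _⟩, (hφs v).trans (by linarith)⟩
        · intro ℓ
          exact hφs (β ℓ)
  refine tendsto_of_tendsto_of_tendsto_of_le_of_le' tendsto_const_nhds hr ?_ ?_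
  · exact Filter.Eventually.of_forall fun n => lghDist_nonneg _ _
  · filter_upwards [hQ] with n hq using (pick n).choose_spec.choose_spec.2 hq

/-- LGH-convergence of `(Xₙ, αₙ)` to `(X, α)` is equivalent to: for every `ε > 0` there
are a finite labeled `ε`-net `(S, β)` in `(X, α)` and finite labeled `ε`-nets
`(Sₙ, βₙ)` in `(Xₙ, αₙ)` for each `n` such that `(Sₙ, βₙ) → (S, β)` in the labeled
Gromov–Hausdorff distance. -/
theorem stmt10 {L : Type*} {X : Type*} [MetricSpace X] [CompactSpace X] (α : L → X)
    (Xn : ℕ → Type*) [∀ n, MetricSpace (Xn n)] [∀ n, CompactSpace (Xn n)]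
    (αn : ∀ n, L → Xn n) :
    Filter.Tendsto (fun n => lghDist (αn n) α) Filter.atTop (nhds 0) ↔
      ∀ ε > (0 : ℝ), ∃ (S : Set X) (β : L → S)
        (Sn : ∀ n, Set (Xn n)) (βn : ∀ n, L → Sn n),
          IsLabeledNetS α ε S β ∧
          (∀ n, IsLabeledNetS (αn n) ε (Sn n) (βn n)) ∧
          Filter.Tendsto (fun n => lghDist (βn n) β) Filter.atTop (nhds 0) :=
  ⟨forward α Xn αn, backward α Xn αn⟩
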